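/- Let ρ be a d×d density matrix and let A₁, …, Aₙ be d×d complex matrices, each Hermitian and unitary (A_iᴴ = A_i and A_i² = 1), such that for all i ≠ j either A_i·A_j = A_j·A_i or A_i·A_j = −A_j·A_i. Define the variance Δ²_ρ(A_i) = tr(ρ·A_i²) − (Re tr(ρ·A_i))². Then Σᵢ Δ²_ρ(A_i) ≥ n − ϑ(G), where ϑ(G) = sSup{ Σᵢ X_{ii} : x ∈ ℝⁿ, X real symmetric n×n, [[1, xᵀ],[x, X]] positive semidefinite, X_{ii} = x_i, X_{ij} = 0 whenever A_i·A_j = −A_j·A_i }. -/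

import Mathlib

/-!
Write `⟨M⟩ = Re tr(ρM)`. For Hermitian `B₀, …, Bₙ` the real matrix `(⟨B_p B_q⟩)` is positive
semidefinite, its quadratic form at `v` being `⟨C²⟩ = tr(CρC) ≥ 0` with `C = Σ v_p B_p`. Taking
`B₀ = 1` and `Bᵢ = ⟨Aᵢ⟩Aᵢ` and using `Aᵢ² = 1` gives a feasible point of the theta program with
objective `Σ ⟨Aᵢ⟩²`: an anticommuting pair has `⟨AᵢAⱼ⟩ = -⟨AⱼAᵢ⟩ = -⟨AᵢAⱼ⟩ = 0`. Hence
`Σ ⟨Aᵢ⟩² ≤ ϑ(G)` and `Σ Δ²Aᵢ = n - Σ ⟨Aᵢ⟩² ≥ n - ϑ(G)`. The supremum is finite because feasibility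
forces `0 ≤ xᵢ ≤ 1` through the `2 × 2` principal minors.
-/

open Matrix ComplexOrder

section Correlation

variable {m ι : Type*} [Fintype m]

def correlationMatrix (ρ : Matrix m m ℂ) (B : ι → Matrix m m ℂ) : Matrix ι ι ℝ :=
  of fun p q => (ρ * (B p * B q)).trace.re

lemma re_trace_mul_mul_comm {ρ A B : Matrix m m ℂ} (hρ : ρ.IsHermitian) (hA : A.IsHermitian)
    (hB : B.IsHermitian) : (ρ * (B * A)).trace.re = (ρ * (A * B)).trace.re := by
  rw [← Complex.conj_re, ← Complex.star_def, ← trace_conjTranspose, conjTranspose_mul,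
    conjTranspose_mul, hA.eq, hB.eq, hρ.eq, trace_mul_comm]

lemma re_trace_mul_mul_eq_zero_of_anticommute {ρ A B : Matrix m m ℂ} (hρ : ρ.IsHermitian)
    (hA : A.IsHermitian) (hB : B.IsHermitian) (h : A * B = -(B * A)) :
    (ρ * (A * B)).trace.re = 0 := by
  have := re_trace_mul_mul_comm hρ hA hB
  rw [show B * A = -(A * B) by rw [h, neg_neg], Matrix.mul_neg, trace_neg, Complex.neg_re] at this
  linarith

lemma quadForm_correlationMatrix [Fintype ι] (ρ : Matrix m m ℂ) (B : ι → Matrix m m ℂ)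
    (v : ι → ℝ) :
    star v ⬝ᵥ (correlationMatrix ρ B *ᵥ v) =
      (ρ * ((∑ p, (v p : ℂ) • B p) * ∑ q, (v q : ℂ) • B q)).trace.re := by
  simp only [star_trivial, dotProduct, mulVec, correlationMatrix, of_apply, Finset.mul_sum,
    Finset.sum_mul, Matrix.smul_mul, Matrix.mul_smul, trace_sum, trace_smul, Complex.re_sum,
    smul_eq_mul, Complex.re_ofReal_mul]
  rw [Finset.sum_comm]
  refine Finset.sum_congr rfl fun p _ => Finset.sum_congr rfl fun q _ => ?_
  ring

lemma posSemidef_correlationMatrix [Fintype ι] {ρ : Matrix m m ℂ} (hρ : ρ.PosSemidef)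
    {B : ι → Matrix m m ℂ} (hB : ∀ p, (B p).IsHermitian) :
    (correlationMatrix ρ B).PosSemidef := by
  refine .of_dotProduct_mulVec_nonneg ?_ fun v => ?_
  · ext p q
    exact re_trace_mul_mul_comm hρ.1 (hB p) (hB q)
  · set C := ∑ p, (v p : ℂ) • B p
    have hC : C.IsHermitian :=
      isSelfAdjoint_sum _ fun p _ => (hB p).smul (Complex.conj_ofReal (v p))
    have hCρC : (ρ * (C * C)).trace = (Cᴴ * ρ * C).trace := by
      rw [hC.eq, Matrix.mul_assoc, trace_mul_comm C, Matrix.mul_assoc]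
    rw [quadForm_correlationMatrix, hCρC]
    exact (Complex.le_def.mp (hρ.conjTranspose_mul_mul_same C).trace_nonneg).1

lemma correlationMatrix_ofReal_smul_apply (ρ : Matrix m m ℂ) (B : ι → Matrix m m ℂ) (c : ι → ℝ)
    (p q : ι) :
    correlationMatrix ρ (fun p => (c p : ℂ) • B p) p q = c p * c q * correlationMatrix ρ B p q := by
  simp only [correlationMatrix, of_apply, Matrix.smul_mul, Matrix.mul_smul, smul_smul, trace_smul,
    smul_eq_mul, ← Complex.ofReal_mul, Complex.re_ofReal_mul]
  ring

lemma correlationMatrix_sum_elim_one [DecidableEq m] {ρ : Matrix m m ℂ} (htr : ρ.trace = 1)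
    (B : ι → Matrix m m ℂ) :
    correlationMatrix ρ (Sum.elim (fun _ : Fin 1 => 1) B) =
      fromBlocks 1 (of fun _ j => (ρ * B j).trace.re) (of fun i _ => (ρ * B i).trace.re)
        (correlationMatrix ρ B) := by
  ext (p | p) (q | q)
  · simp [correlationMatrix, htr, Subsingleton.elim p q]
  all_goals simp [correlationMatrix]

end Correlation

lemma le_one_of_posSemidef_fromBlocks {n : Type*} [Fintype n] {x : n → ℝ} {X : Matrix n n ℝ}
    (h : (fromBlocks (1 : Matrix (Fin 1) (Fin 1) ℝ) (of fun _ j => x j) (of fun i _ => x i)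
      X).PosSemidef) {i : n} (hi : X i i = x i) : x i ≤ 1 := by
  have hdiag : 0 ≤ X i i := h.diag_nonneg (i := Sum.inr i)
  have hminor := (h.submatrix ![Sum.inl 0, Sum.inr i]).det_nonneg
  rw [det_fin_two] at hminor
  simp only [submatrix_apply, Matrix.cons_val_zero, Matrix.cons_val_one, fromBlocks_apply₁₁,
    fromBlocks_apply₁₂, fromBlocks_apply₂₁, fromBlocks_apply₂₂, of_apply, one_apply_eq,
    one_mul] at hminor
  nlinarith

theorem additive_uncertainty_relation_general (d n : ℕ)
    (ρ : Matrix (Fin d) (Fin d) ℂ) (hρ : ρ.PosSemidef) (htr : ρ.trace = 1)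
    (A : Fin n → Matrix (Fin d) (Fin d) ℂ)
    (hherm : ∀ i, (A i)ᴴ = A i) (hunit : ∀ i, A i * A i = 1) :
    (n : ℝ) -
      sSup {t : ℝ | ∃ (x : Fin n → ℝ) (X : Matrix (Fin n) (Fin n) ℝ),
        X.IsSymm ∧
        (Matrix.fromBlocks (1 : Matrix (Fin 1) (Fin 1) ℝ)
          (Matrix.of fun (_ : Fin 1) j => x j)
          (Matrix.of fun i (_ : Fin 1) => x i) X).PosSemidef ∧
        (∀ i, X i i = x i) ∧
        (∀ i j, A i * A j = -(A j * A i) → X i j = 0) ∧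
        t = ∑ i, X i i} ≤
    ∑ i, ((ρ * (A i * A i)).trace.re - ((ρ * A i).trace.re) ^ 2) := by
  set a : Fin n → ℝ := fun i => (ρ * A i).trace.re
  have hA : ∀ i, (A i).IsHermitian := hherm
  have hAA : ∀ i, (ρ * (A i * A i)).trace.re = 1 := fun i => by simp [hunit, htr]
  let B : Fin n → Matrix (Fin d) (Fin d) ℂ := fun i => (a i : ℂ) • A i
  have hB : ∀ i, (B i).IsHermitian := fun i => (hA i).smul (Complex.conj_ofReal (a i))
  have hX (i j) : correlationMatrix ρ B i j = a i * a j * (ρ * (A i * A j)).trace.re :=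
    correlationMatrix_ofReal_smul_apply ρ A a i j
  simp only [hAA, Finset.sum_sub_distrib, Finset.sum_const, Finset.card_univ, Fintype.card_fin,
    nsmul_one]
  gcongr
  refine le_csSup ⟨n, ?_⟩ ⟨fun i => a i ^ 2, correlationMatrix ρ B, ?_, ?_, ?_, ?_, ?_⟩
  · rintro t ⟨x, X, -, hpsd, hdiag, -, rfl⟩
    calc ∑ i, X i i = ∑ i, x i := Finset.sum_congr rfl fun i _ => hdiag i
      _ ≤ ∑ _ : Fin n, 1 :=
        Finset.sum_le_sum fun i _ => le_one_of_posSemidef_fromBlocks hpsd (hdiag i)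
      _ = n := by simp
  · exact isHermitian_iff_isSymm.mp (posSemidef_correlationMatrix hρ hB).1
  · have := posSemidef_correlationMatrix hρ (B := Sum.elim (fun _ : Fin 1 => 1) B)
      (by rintro (_ | i); exacts [isHermitian_one, hB i])
    rw [correlationMatrix_sum_elim_one htr] at this
    convert this using 4 <;> simp [B, a, sq]
  · intro i
    simp [hX, hAA, sq]
  · intro i j hij
    simp [hX, re_trace_mul_mul_eq_zero_of_anticommute hρ.1 (hA i) (hA j) hij]
  · simp [hX, hAA, sq, a]

/-- Additive uncertainty relation: for a density matrix `ρ` and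
Hermitian unitary observables `A₁, …, Aₙ` that pairwise commute or anticommute,
`Σᵢ Δ²_ρ(Aᵢ) ≥ n − ϑ(G)`, where `Δ²_ρ(A) = tr(ρA²) − (Re tr(ρA))²` and `ϑ(G)` is
the Lovász theta number of the anticommutativity graph, expressed as a supremum
over the feasible set of the theta SDP. -/
theorem additive_uncertainty_relation (d n : ℕ)
    (ρ : Matrix (Fin d) (Fin d) ℂ) (hρ : ρ.PosSemidef) (htr : ρ.trace = 1)
    (A : Fin n → Matrix (Fin d) (Fin d) ℂ)
    (hherm : ∀ i, (A i)ᴴ = A i) (hunit : ∀ i, A i * A i = 1)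
    (hcomm : ∀ i j, i ≠ j → A i * A j = A j * A i ∨ A i * A j = -(A j * A i)) :
    (n : ℝ) -
      sSup {t : ℝ | ∃ (x : Fin n → ℝ) (X : Matrix (Fin n) (Fin n) ℝ),
        X.IsSymm ∧
        (Matrix.fromBlocks (1 : Matrix (Fin 1) (Fin 1) ℝ)
          (Matrix.of fun (_ : Fin 1) j => x j)
          (Matrix.of fun i (_ : Fin 1) => x i) X).PosSemidef ∧
        (∀ i, X i i = x i) ∧
        (∀ i j, A i * A j = -(A j * A i) → X i j = 0) ∧
        t = ∑ i, X i i} ≤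
    ∑ i, ((ρ * (A i * A i)).trace.re - ((ρ * A i).trace.re) ^ 2) :=
  additive_uncertainty_relation_general d n ρ hρ htr A hherm hunit
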